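/- Under the single-cluster pointwise setting, let p ∈ ℳ and q ∈ 𝒫 both lie in the same area 𝒫_n. Then the position–position component of the negative loss gradient satisfies e_pᵀ(−∇_Q ℓ(Q))e_q = s_{p→q}(Q) · ( Σ_{a≠n} z_a² A_a(Q)² + z_n² (1 − A_n(Q)) · ( 1{q ∈ 𝒰} − A_n(Q) ) ), where A_m(Q) = Σ_{r∈𝒰∩𝒫_m} s_{p→r}(Q) and 1{q ∈ 𝒰} is 1 if q is unmasked and 0 otherwise. -/

import Mathlib

/-!
Single-cluster pointwise setting (shared context for Statements 2–6 of the paper):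

`𝒫 = Fin P` is partitioned into areas `𝒫_1, …, 𝒫_N` via `area : Fin P → Fin N`
(`𝒫_j = area⁻¹ j`); `v_1, …, v_N ∈ ℝ^d` are pairwise orthogonal unit features;
`z_1, …, z_N ∈ ℝ`; the sample has columns `X_q = z_{area q} v_{area q}`; positional
encodings `e_q` are unit vectors, pairwise orthogonal and orthogonal to every feature;
`ℳ ⊂ 𝒫` is the mask set, `𝒰 = 𝒫 ∖ ℳ`; `Y = mask(X)` zeroes masked columns;
`X̃ = Y + E`; `s_{p→q}(Q)` is the softmax attention on `X̃`;
`F_p(Q) = Σ_q s_{p→q}(Q) Y_q`; `ℓ(Q) = (1/2) Σ_{p∈ℳ} ‖F_p(Q) − X_p‖²`;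
`A_m(Q) = Σ_{q ∈ 𝒰 ∩ 𝒫_m} s_{p→q}(Q)` is the unmasked area attention.

The gradient identities `e_pᵀ(−∇_Q ℓ)v` and `e_pᵀ(−∇_Q ℓ)e_q` are expressed via the
Fréchet derivative of `ℓ` paired against the rank-one directions `e_p vᵀ` resp. `e_p e_qᵀ`
(for a matrix `M` one has `aᵀ M b = ⟨M, a bᵀ⟩_F`).
-/

noncomputable section

open Finset

variable {d P N : ℕ}

/-- The sample: patch `q` carries content `z_{area q} · v_{area q}`. -/
def Xcol (area : Fin P → Fin N) (v : Fin N → Fin d → ℝ) (z : Fin N → ℝ) :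
    Fin P → Fin d → ℝ :=
  fun q i => z (area q) * v (area q) i

/-- Masked sample: masked patches are set to the value `0`. -/
def Ycol (M : Finset (Fin P)) (X : Fin P → Fin d → ℝ) : Fin P → Fin d → ℝ :=
  fun q i => if q ∈ M then 0 else X q i

/-- Positional-encoding-augmented input `X̃ = Y + E`. -/
def XtCol (e Y : Fin P → Fin d → ℝ) : Fin P → Fin d → ℝ :=
  fun q i => Y q i + e q i

/-- Softmax attention score `s_{p→q}(Q)` computed on the augmented inputs `X̃`. -/
def attScore (Xt : Fin P → Fin d → ℝ) (Q : Fin d → Fin d → ℝ) (p q : Fin P) : ℝ :=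
  Real.exp (∑ i, ∑ j, Xt p i * Q i j * Xt q j) /
    ∑ r, Real.exp (∑ i, ∑ j, Xt p i * Q i j * Xt r j)

/-- Transformer output at patch `p`: `F_p(Q) = Σ_q s_{p→q}(Q) · Y_q`. -/
def Fout (Xt Y : Fin P → Fin d → ℝ) (Q : Fin d → Fin d → ℝ) (p : Fin P) :
    Fin d → ℝ :=
  fun i => ∑ q, attScore Xt Q p q * Y q i

/-- Per-sample masked reconstruction loss `ℓ(Q) = (1/2) Σ_{p∈ℳ} ‖F_p(Q) − X_p‖²`. -/
def maeLoss (M : Finset (Fin P)) (X Xt Y : Fin P → Fin d → ℝ)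
    (Q : Fin d → Fin d → ℝ) : ℝ :=
  (1 / 2) * ∑ p ∈ M, ∑ i, (Fout Xt Y Q p i - X p i) ^ 2

/-- Unmasked area attention `A_j(Q) = Σ_{q ∈ 𝒰 ∩ 𝒫_j} s_{p→q}(Q)` of patch `p` to area `j`. -/
def areaAttn (area : Fin P → Fin N) (M : Finset (Fin P)) (Xt : Fin P → Fin d → ℝ)
    (Q : Fin d → Fin d → ℝ) (p : Fin P) (j : Fin N) : ℝ :=
  ∑ q ∈ Finset.univ.filter (fun q => q ∉ M ∧ area q = j), attScore Xt Q p q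

/-!
The direction `e_p e_qᵀ` moves a single logit: since the positional encodings are orthonormal
and orthogonal to the content, `X̃_r · e_w = δ_{rw}`, hence `X̃_{p'}ᵀ (e_p e_qᵀ) X̃_r = δ_{p'p} δ_{rq}`.
The softmax derivative `∂s_{p→r} = s_{p→r} (δ_{rq} − s_{p→q})` then turns the derivative of the
loss into `s_{p→q} ⟨F_p − X_p, Y_q − F_p⟩`. All three vectors lie in the span of the orthonormal
features, `F_p = Σ_m A_m z_m v_m`, `X_p = z_n v_n` and `Y_q = 1{q ∈ 𝒰} z_n v_n`, so the inner
product is a sum of coefficient products over the areas; the areas `m ≠ n` contribute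
`−z_m² A_m²` and the area `n` contributes `−z_n² (1 − A_n)(1{q ∈ 𝒰} − A_n)`.
-/

section Softmax

variable {ι : Type*} [Fintype ι]

def softmax (a : ι → ℝ) (r : ι) : ℝ :=
  Real.exp (a r) / ∑ u, Real.exp (a u)

theorem HasDerivAt.softmax {a : ℝ → ι → ℝ} {a' : ι → ℝ} {t : ℝ}
    (ha : ∀ u, HasDerivAt (fun s => a s u) (a' u) t) (r : ι) :
    HasDerivAt (fun s => softmax (a s) r)
      (softmax (a t) r * (a' r - ∑ u, softmax (a t) u * a' u)) t := by
  have hexp : ∀ u, HasDerivAt (fun s => Real.exp (a s u)) (Real.exp (a t u) * a' u) t :=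
    fun u => (ha u).exp
  have hS_pos : 0 < ∑ u, Real.exp (a t u) :=
    Finset.sum_pos (fun u _ => Real.exp_pos _) ⟨r, mem_univ r⟩
  refine ((hexp r).fun_div (HasDerivAt.fun_sum fun u _ => hexp u) hS_pos.ne').congr_deriv ?_
  simp only [_root_.softmax, div_mul_eq_mul_div, ← Finset.sum_div]
  field_simp

end Softmax

section Attention

def attLogit (Xt : Fin P → Fin d → ℝ) (Q : Fin d → Fin d → ℝ) (p r : Fin P) : ℝ :=
  ∑ i, ∑ j, Xt p i * Q i j * Xt r j

variable (Xt : Fin P → Fin d → ℝ)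

theorem attScore_eq_softmax (Q : Fin d → Fin d → ℝ) (p : Fin P) :
    attScore Xt Q p = softmax (attLogit Xt Q p) :=
  rfl

theorem attLogit_add_smul (Q H : Fin d → Fin d → ℝ) (t : ℝ) (p : Fin P) :
    attLogit Xt (Q + t • H) p = attLogit Xt Q p + t • attLogit Xt H p := by
  ext r
  simp only [attLogit, Pi.add_apply, Pi.smul_apply, smul_eq_mul, mul_add, add_mul,
    Finset.sum_add_distrib, Finset.mul_sum]
  congr 1
  exact Finset.sum_congr rfl fun i _ => Finset.sum_congr rfl fun j _ => by ring

theorem attLogit_rankOne (a b : Fin d → ℝ) (p r : Fin P) :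
    attLogit Xt (fun i j => a i * b j) p r = (∑ i, Xt p i * a i) * ∑ j, Xt r j * b j := by
  simp only [attLogit, Finset.sum_mul_sum]
  exact Finset.sum_congr rfl fun i _ => Finset.sum_congr rfl fun j _ => by ring

theorem hasLineDerivAt_attScore (Q H : Fin d → Fin d → ℝ) (p r : Fin P) :
    HasLineDerivAt ℝ (fun Q => attScore Xt Q p r)
      (attScore Xt Q p r * (attLogit Xt H p r - ∑ u, attScore Xt Q p u * attLogit Xt H p u))
      Q H := by
  have hline : ∀ u, HasDerivAt (fun t : ℝ => (attLogit Xt Q p + t • attLogit Xt H p) u)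
      (attLogit Xt H p u) 0 := fun u => by
    simpa using ((hasDerivAt_id (0 : ℝ)).mul_const (attLogit Xt H p u)).const_add
      (attLogit Xt Q p u)
  simpa [HasLineDerivAt, attScore_eq_softmax, attLogit_add_smul] using
    HasDerivAt.softmax hline r

theorem differentiableAt_attScore (Q : Fin d → Fin d → ℝ) (p r : Fin P) :
    DifferentiableAt ℝ (fun Q => attScore Xt Q p r) Q := by
  have hS : ∑ u, Real.exp (attLogit Xt Q p u) ≠ 0 :=
    (Finset.sum_pos (fun u _ => Real.exp_pos _) ⟨r, mem_univ r⟩).ne'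
  simp only [attScore]
  fun_prop (disch := exact hS)

end Attention

section Loss

variable (M : Finset (Fin P)) (X Xt Y : Fin P → Fin d → ℝ) (Q : Fin d → Fin d → ℝ)

theorem differentiableAt_maeLoss : DifferentiableAt ℝ (maeLoss M X Xt Y) Q := by
  have := differentiableAt_attScore Xt Q
  unfold maeLoss Fout
  fun_prop

theorem hasLineDerivAt_maeLoss {H : Fin d → Fin d → ℝ} {s' : Fin P → Fin P → ℝ}
    (hs : ∀ p r, HasLineDerivAt ℝ (fun Q => attScore Xt Q p r) (s' p r) Q H) :
    HasLineDerivAt ℝ (maeLoss M X Xt Y)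
      (∑ p ∈ M, ∑ i, (Fout Xt Y Q p i - X p i) * ∑ r, s' p r * Y r i) Q H := by
  have hF : ∀ p i, HasDerivAt (fun t : ℝ => Fout Xt Y (Q + t • H) p i - X p i)
      (∑ r, s' p r * Y r i) 0 :=
    fun p i => (HasDerivAt.fun_sum fun r _ => (hs p r).mul_const (Y r i)).sub_const (X p i)
  refine ((HasDerivAt.fun_sum fun p _ => HasDerivAt.fun_sum fun i _ =>
    (hF p i).fun_pow 2).const_mul (1 / 2 : ℝ)).congr_deriv ?_
  norm_num [Finset.mul_sum, ← mul_assoc]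

theorem fderiv_maeLoss_apply (H : Fin d → Fin d → ℝ) :
    fderiv ℝ (maeLoss M X Xt Y) Q H = ∑ p ∈ M, ∑ i, (Fout Xt Y Q p i - X p i) *
      ∑ r, attScore Xt Q p r *
        (attLogit Xt H p r - ∑ u, attScore Xt Q p u * attLogit Xt H p u) * Y r i :=
  (differentiableAt_maeLoss M X Xt Y Q).lineDeriv_eq_fderiv.symm.trans
    (hasLineDerivAt_maeLoss M X Xt Y Q fun p r => hasLineDerivAt_attScore Xt Q H p r).lineDeriv

theorem fderiv_maeLoss_rankOne {p q : Fin P} (hp : p ∈ M) {a b : Fin d → ℝ}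
    (ha : ∀ r, ∑ i, Xt r i * a i = if r = p then 1 else 0)
    (hb : ∀ r, ∑ j, Xt r j * b j = if r = q then 1 else 0) :
    fderiv ℝ (maeLoss M X Xt Y) Q (fun i j => a i * b j) =
      attScore Xt Q p q * ∑ i, (Fout Xt Y Q p i - X p i) * (Y q i - Fout Xt Y Q p i) := by
  rw [fderiv_maeLoss_apply, Finset.sum_eq_single_of_mem p hp]
  · simp only [attLogit_rankOne, ha, hb, if_true, mul_ite, mul_one, mul_zero,
      Finset.sum_ite_eq', Finset.mem_univ]
    have hinner : ∀ i, ∑ r, attScore Xt Q p r * ((if r = q then 1 else 0) - attScore Xt Q p q) *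
        Y r i = attScore Xt Q p q * (Y q i - Fout Xt Y Q p i) := fun i => by
      simp only [mul_sub, sub_mul, Finset.sum_sub_distrib, mul_ite, ite_mul, mul_one, mul_zero,
        zero_mul, Finset.sum_ite_eq', Finset.mem_univ, if_true, Fout, Finset.mul_sum]
      exact congrArg _ (Finset.sum_congr rfl fun r _ => by ring)
    simp only [hinner, Finset.mul_sum]
    exact Finset.sum_congr rfl fun i _ => by ring
  · intro p' _ hne
    simp [attLogit_rankOne, ha, hne]

end Loss

section Orthonormal

variable {ι κ : Type*} [Fintype κ] [DecidableEq ι]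

theorem sum_mul_eq_ite_of_orthonormal {w : ι → κ → ℝ}
    (hunit : ∀ m, ∑ i, w m i ^ 2 = 1) (horth : ∀ m m', m ≠ m' → ∑ i, w m i * w m' i = 0)
    (m m' : ι) : ∑ i, w m i * w m' i = if m = m' then 1 else 0 := by
  split_ifs with h
  · subst h
    simpa [sq] using hunit m
  · exact horth m m' h

theorem sum_lincomb_mul_lincomb_of_orthonormal [Fintype ι] {v : ι → κ → ℝ}
    (hv_unit : ∀ m, ∑ i, v m i ^ 2 = 1) (hv_orth : ∀ m m', m ≠ m' → ∑ i, v m i * v m' i = 0)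
    (a b : ι → ℝ) :
    ∑ i, (∑ m, a m * v m i) * (∑ m, b m * v m i) = ∑ m, a m * b m := by
  calc ∑ i, (∑ m, a m * v m i) * (∑ m, b m * v m i)
      = ∑ m, ∑ m', a m * b m' * ∑ i, v m i * v m' i := by
        simp_rw [Fintype.sum_mul_sum, Finset.mul_sum]
        rw [Finset.sum_comm]
        refine Finset.sum_congr rfl fun m _ => ?_
        rw [Finset.sum_comm]
        exact Finset.sum_congr rfl fun m' _ => Finset.sum_congr rfl fun i _ => by ring
    _ = ∑ m, a m * b m := by
        simp [sum_mul_eq_ite_of_orthonormal hv_unit hv_orth]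

end Orthonormal

section Setting

variable (area : Fin P → Fin N) (v : Fin N → Fin d → ℝ) (z : Fin N → ℝ) (M : Finset (Fin P))

theorem Ycol_Xcol_apply (q : Fin P) (i : Fin d) :
    Ycol M (Xcol area v z) q i = (if q ∈ M then 0 else z (area q)) * v (area q) i := by
  by_cases hq : q ∈ M <;> simp [Ycol, Xcol, hq]

theorem sum_XtCol_mul_eq_ite {e : Fin P → Fin d → ℝ}
    (he_unit : ∀ p, ∑ i, e p i ^ 2 = 1) (he_orth : ∀ p q, p ≠ q → ∑ i, e p i * e q i = 0)
    (hev : ∀ p n, ∑ i, e p i * v n i = 0) (r w : Fin P) :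
    ∑ j, XtCol e (Ycol M (Xcol area v z)) r j * e w j = if r = w then 1 else 0 := by
  have hY : ∑ j, Ycol M (Xcol area v z) r j * e w j = 0 := by
    simp only [Ycol_Xcol_apply, mul_assoc, ← Finset.mul_sum, mul_comm (v _ _), hev, mul_zero]
  simp only [XtCol, add_mul, Finset.sum_add_distrib, hY, zero_add,
    sum_mul_eq_ite_of_orthonormal he_unit he_orth]

theorem Fout_Ycol_Xcol (Xt : Fin P → Fin d → ℝ) (Q : Fin d → Fin d → ℝ) (p : Fin P) (i : Fin d) :
    Fout Xt (Ycol M (Xcol area v z)) Q p i =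
      ∑ m, areaAttn area M Xt Q p m * z m * v m i := by
  simp only [Fout, areaAttn, Finset.sum_mul, Finset.sum_filter, Ycol_Xcol_apply]
  rw [Finset.sum_comm]
  refine Finset.sum_congr rfl fun r _ => ?_
  by_cases hr : r ∈ M <;> simp [hr, mul_assoc]

end Setting

/-- for a masked patch `p` and a patch `q` in the same area `𝒫_n`,
`e_pᵀ(−∇_Q ℓ(Q))e_q = s_{p→q}(Q)·(Σ_{a≠n} z_a² A_a(Q)²
  + z_n²(1−A_n(Q))·(1{q∈𝒰} − A_n(Q)))`. -/
theorem pp_gradient_same_area (area : Fin P → Fin N) (v : Fin N → Fin d → ℝ)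
    (z : Fin N → ℝ) (e : Fin P → Fin d → ℝ)
    (hv_unit : ∀ n, ∑ i, v n i ^ 2 = 1)
    (hv_orth : ∀ n n', n ≠ n' → ∑ i, v n i * v n' i = 0)
    (he_unit : ∀ p, ∑ i, e p i ^ 2 = 1)
    (he_orth : ∀ p q, p ≠ q → ∑ i, e p i * e q i = 0)
    (hev : ∀ p n, ∑ i, e p i * v n i = 0)
    (M : Finset (Fin P)) (Q : Fin d → Fin d → ℝ)
    (p : Fin P) (hp : p ∈ M) (n : Fin N) (hn : area p = n)
    (q : Fin P) (hq : area q = n) :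
    (let X := Xcol area v z;
     let Y := Ycol M X;
     let Xt := XtCol e Y;
     let A := areaAttn area M Xt Q p;
     -(fderiv ℝ (maeLoss M X Xt Y) Q (fun i j => e p i * e q j)) =
       attScore Xt Q p q * ((∑ a ∈ Finset.univ \ {n}, z a ^ 2 * A a ^ 2) +
         z n ^ 2 * (1 - A n) * ((if q ∉ M then (1 : ℝ) else 0) - A n))) := by
  intro X Y Xt A
  have hdual := sum_XtCol_mul_eq_ite area v z M he_unit he_orth hev
  have hF : ∀ i, Fout Xt Y Q p i = ∑ m, A m * z m * v m i := Fout_Ycol_Xcol area v z M Xt Q p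
  have hFX : ∀ i, Fout Xt Y Q p i - X p i =
      ∑ m, (A m * z m - if m = n then z n else 0) * v m i := fun i => by
    simp [hF, X, Xcol, hn, sub_mul, ite_mul]
  have hYF : ∀ i, Y q i - Fout Xt Y Q p i =
      ∑ m, ((if m = n then (if q ∈ M then 0 else z n) else 0) - A m * z m) * v m i := fun i => by
    simp [hF, Y, X, Ycol_Xcol_apply, hq, sub_mul, ite_mul]
  rw [fderiv_maeLoss_rankOne M X Xt Y Q hp (hdual · p) (hdual · q),
    Finset.sum_congr rfl fun i _ => by rw [hFX i, hYF i],
    sum_lincomb_mul_lincomb_of_orthonormal hv_unit hv_orth,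
    Finset.sum_eq_sum_sdiff_singleton_add (mem_univ n)]
  have hoff : ∑ m ∈ univ \ {n}, (A m * z m - if m = n then z n else 0) *
      ((if m = n then (if q ∈ M then 0 else z n) else 0) - A m * z m) =
        -∑ m ∈ univ \ {n}, z m ^ 2 * A m ^ 2 := by
    rw [← Finset.sum_neg_distrib]
    refine Finset.sum_congr rfl fun m hm => ?_
    have hmn : m ≠ n := by simpa using hm
    simp only [hmn, if_false]
    ring
  rw [hoff]
  by_cases hqM : q ∈ M <;> simp [hqM] <;> ring
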